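/- Under the hypotheses L,K ∈ ℤⁿ with 0 < kᵢ < ℓᵢ, G = ℤ_{τ−κ} with τ=∏ℓᵢ, κ=∏kᵢ, and kᵢ units in G for i ≥ 2, the splitting sequence β₁=1, β_{i+1}=k_{i+1}⁻¹ℓᵢβᵢ satisfies (L−K)·β = Σᵢ (ℓᵢ−kᵢ)βᵢ = 0 in G. -/

import Mathlib

/-!
Writing `βᵢ₊₁ = kᵢ₊₁⁻¹ ℓᵢ βᵢ` as `ℓᵢ βᵢ = kᵢ₊₁ βᵢ₊₁`, the chain of these relations gives
`(∏_{i ≥ 2} kᵢ) βₙ = (∏_{i < n} ℓᵢ) β₁`; multiplying by `ℓₙ` and using `τ = κ` in `G`, then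
cancelling the unit `∏_{i ≥ 2} kᵢ`, closes the chain cyclically: `ℓₙ βₙ = k₁ β₁`. Hence
`ℓᵢ βᵢ = k_{σ i} β_{σ i}` for the cyclic rotation `σ`, and `Σ ℓᵢ βᵢ = Σ kᵢ βᵢ`.
-/

open Finset

theorem ZMod.natCast_eq_natCast_of_le {a b : ℕ} (h : b ≤ a) : (a : ZMod (a - b)) = b := by
  have h0 := ZMod.natCast_self (a - b)
  rwa [Nat.cast_sub h, sub_eq_zero] at h0

section Chain

variable {R : Type*}

theorem Fin.prod_succ_mul_last_eq_prod_castSucc_mul_zero [CommMonoid R] :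
    ∀ {m : ℕ} {a b x : Fin (m + 1) → R},
      (∀ i : Fin m, a i.castSucc * x i.castSucc = b i.succ * x i.succ) →
      (∏ i : Fin m, b i.succ) * x (Fin.last m) = (∏ i : Fin m, a i.castSucc) * x 0
  | 0, _, _, _, _ => by simp
  | m + 1, a, b, x, h => by
    have ih := Fin.prod_succ_mul_last_eq_prod_castSucc_mul_zero
      (a := a ∘ Fin.castSucc) (b := b ∘ Fin.castSucc) (x := x ∘ Fin.castSucc)
      fun i => h i.castSucc
    simp only [Function.comp_apply, Fin.castSucc_zero] at ih
    rw [Fin.prod_univ_castSucc, Fin.prod_univ_castSucc, mul_assoc, ← Fin.succ_last,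
      ← h (Fin.last m)]
    simp only [Fin.succ_castSucc]
    rw [mul_left_comm, ih]
    ac_rfl

theorem Fin.mul_last_eq_mul_zero_of_chain [CommMonoid R] {m : ℕ} {a b x : Fin (m + 1) → R}
    (hchain : ∀ i : Fin m, a i.castSucc * x i.castSucc = b i.succ * x i.succ)
    (hprod : ∏ i, a i = ∏ i, b i) (hunit : ∀ i : Fin m, IsUnit (b i.succ)) :
    a (Fin.last m) * x (Fin.last m) = b 0 * x 0 := by
  have hu : IsUnit (∏ i : Fin m, b i.succ) := IsUnit.prod_univ_iff.mpr hunit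
  refine hu.mul_left_cancel ?_
  calc (∏ i : Fin m, b i.succ) * (a (Fin.last m) * x (Fin.last m))
      = a (Fin.last m) * (∏ i : Fin m, a i.castSucc) * x 0 := by
        rw [mul_left_comm, prod_succ_mul_last_eq_prod_castSucc_mul_zero hchain, mul_assoc]
    _ = (∏ i : Fin m, b i.succ) * (b 0 * x 0) := by
        rw [mul_comm (a _), ← Fin.prod_univ_castSucc, hprod, Fin.prod_univ_succ]
        ac_rfl

theorem Fin.mul_eq_mul_finRotate_of_chain [CommMonoid R] {m : ℕ} {a b x : Fin (m + 1) → R}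
    (hchain : ∀ i : Fin m, a i.castSucc * x i.castSucc = b i.succ * x i.succ)
    (hprod : ∏ i, a i = ∏ i, b i) (hunit : ∀ i : Fin m, IsUnit (b i.succ)) (i : Fin (m + 1)) :
    a i * x i = b (finRotate _ i) * x (finRotate _ i) := by
  induction i using Fin.lastCases with
  | last => rw [finRotate_last, mul_last_eq_mul_zero_of_chain hchain hprod hunit]
  | cast i =>
    have hrot : finRotate (m + 1) i.castSucc = i.succ := finRotate_of_lt i.isLt
    rw [hchain i, hrot]

theorem sum_sub_mul_eq_zero_of_mul_eq_mul_finRotate [CommRing R] {n : ℕ} {a b x : Fin n → R}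
    (h : ∀ i, a i * x i = b (finRotate n i) * x (finRotate n i)) :
    ∑ i, (a i - b i) * x i = 0 := by
  simp only [sub_mul, sum_sub_distrib, h, Equiv.sum_comp (finRotate n) (fun i => b i * x i),
    sub_self]

end Chain

/-- With `β₁ = 1` and `β_{i+1} = k_{i+1}⁻¹ ℓᵢ βᵢ` in `G = ℤ_{τ−κ}`, the splitting
sequence satisfies `(L−K)·β = Σᵢ (ℓᵢ−kᵢ)βᵢ = 0`. -/
theorem chair_LminusK_beta_zero (n : ℕ) (ℓ k : Fin n → ℕ)
    (hlk : ∀ i, 0 < k i ∧ k i < ℓ i)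
    (hunit : ∀ i : Fin n, 0 < (i : ℕ) →
      IsUnit ((k i : ZMod ((∏ i, ℓ i) - ∏ i, k i))))
    (β : Fin n → ZMod ((∏ i, ℓ i) - ∏ i, k i))
    (hβ : ∀ i : ℕ, (h : i + 1 < n) →
      β ⟨i + 1, h⟩ =
        Ring.inverse ((k ⟨i + 1, h⟩ : ZMod ((∏ i, ℓ i) - ∏ i, k i))) *
          (ℓ ⟨i, by omega⟩ : ZMod ((∏ i, ℓ i) - ∏ i, k i)) * β ⟨i, by omega⟩) :
    ∑ i, ((ℓ i - k i : ℕ) : ZMod ((∏ i, ℓ i) - ∏ i, k i)) * β i = 0 := by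
  obtain _ | m := n
  · simp
  have hprod : ∏ i, (ℓ i : ZMod ((∏ i, ℓ i) - ∏ i, k i)) = ∏ i, (k i : ZMod _) := by
    rw [← Nat.cast_prod, ← Nat.cast_prod, ZMod.natCast_eq_natCast_of_le
      (prod_le_prod' fun i _ => (hlk i).2.le)]
  have hunit' (i : Fin m) : IsUnit (k i.succ : ZMod ((∏ i, ℓ i) - ∏ i, k i)) :=
    hunit i.succ i.succ_pos
  have hchain (i : Fin m) : (ℓ i.castSucc : ZMod ((∏ i, ℓ i) - ∏ i, k i)) * β i.castSucc
      = k i.succ * β i.succ := by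
    have hrec : β i.succ = Ring.inverse (k i.succ : ZMod ((∏ i, ℓ i) - ∏ i, k i)) *
        ℓ i.castSucc * β i.castSucc :=
      hβ i i.succ.isLt
    rw [hrec, mul_assoc, Ring.mul_inverse_cancel_left _ _ (hunit' i)]
  simp_rw [Nat.cast_sub (hlk _).2.le]
  exact sum_sub_mul_eq_zero_of_mul_eq_mul_finRotate
    (Fin.mul_eq_mul_finRotate_of_chain hchain hprod hunit')
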